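/- Let c > 0. Suppose u is a smooth real-valued function on ℝ², 2π-periodic in the second variable y, such that u and all its partial derivatives tend to 0 as |x| → ∞ faster than any negative power of |x|, uniformly in y, and u satisfies ∂_y u + ∂_x²u = 2∂_x(Q_c(x)·u) on ℝ². Then u ≡ 0. (Equivalently, the kernel of the operator L_c = ∂_x + ∂_x^{-1}∂_y − 2Q_c(x) is trivial.) -/

import Mathlib

open Real

/-- The kink profile `Q_c(x) = √(c/2) · tanh(√(c/2)·x)`. -/
noncomputable def kinkProfile (c x : ℝ) : ℝ := Real.sqrt (c / 2) * Real.tanh (Real.sqrt (c / 2) * x)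

/-- A smooth real-valued function on `ℝ²`, `2π`-periodic in the second variable, which is
rapidly decaying in `x` together with all its partial derivatives, uniformly in `y`. -/
structure PeriodicSchwartzX (u : ℝ → ℝ → ℝ) : Prop where
  smooth : ContDiff ℝ (⊤ : ℕ∞) (fun p : ℝ × ℝ => u p.1 p.2)
  periodic : ∀ x y, u x (y + 2 * π) = u x y
  decay : ∀ n m : ℕ, ∃ C : ℝ, ∀ x y : ℝ,
    ‖iteratedFDeriv ℝ n (fun p : ℝ × ℝ => u p.1 p.2) (x, y)‖ ≤ C / (1 + |x|) ^ m

/-- The hyperbolic tangent has derivative `1 / cosh x ^ 2`. -/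
lemma hasDerivAt_tanh' (x : ℝ) : HasDerivAt Real.tanh (1 / Real.cosh x ^ 2) x := by
  have h := (Real.hasDerivAt_sinh x).div (Real.hasDerivAt_cosh x) (ne_of_gt (Real.cosh_pos x))
  have hfun : Real.tanh = fun y => Real.sinh y / Real.cosh y :=
    funext fun y => Real.tanh_eq_sinh_div_cosh y
  rw [hfun]
  refine h.congr_deriv ?_
  have h1 := Real.cosh_sq_sub_sinh_sq x
  have h2 : Real.cosh x ^ 2 ≠ 0 := pow_ne_zero 2 (ne_of_gt (Real.cosh_pos x))
  rw [div_left_inj' h2]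
  nlinarith [h1]

/-- The kink profile has positive derivative everywhere. -/
lemma kink_deriv_pos (c : ℝ) (hc : 0 < c) (x : ℝ) :
    ∃ q : ℝ, 0 < q ∧ HasDerivAt (kinkProfile c) q x := by
  set a : ℝ := Real.sqrt (c / 2) with ha
  have ha0 : 0 < a := Real.sqrt_pos.mpr (by linarith)
  have hinner : HasDerivAt (fun t : ℝ => a * t) a x := by
    simpa using (hasDerivAt_id x).const_mul a
  have hcomp : HasDerivAt (fun t : ℝ => Real.tanh (a * t))
      (1 / Real.cosh (a * x) ^ 2 * a) x := (hasDerivAt_tanh' (a * x)).comp x hinner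
  refine ⟨a * (1 / Real.cosh (a * x) ^ 2 * a), ?_, ?_⟩
  · have hcosh : 0 < Real.cosh (a * x) := Real.cosh_pos (a * x)
    positivity
  · exact hcomp.const_mul a

/-- Second-derivative test: at an interior local maximum of a smooth function, the second
derivative is nonpositive. -/
lemma second_deriv_nonpos {f : ℝ → ℝ} (hf : ContDiff ℝ (⊤ : ℕ∞) f) {a : ℝ}
    (hmax : IsLocalMax f a) : deriv (deriv f) a ≤ 0 := by
  by_contra hcon
  push_neg at hcon
  have h0 : deriv f a = 0 := hmax.deriv_eq_zero
  have hinf : ContDiff ℝ ((⊤ : ℕ∞) : WithTop ℕ∞) f := hf.of_le (by simp)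
  have hd1 : ContDiff ℝ ((⊤ : ℕ∞) : WithTop ℕ∞) (deriv f) := (contDiff_infty_iff_deriv.mp hinf).2
  have hcont2 : Continuous (deriv (deriv f)) := (contDiff_infty_iff_deriv.mp hd1).2.continuous
  have hopen : IsOpen {x : ℝ | 0 < deriv (deriv f) x} := isOpen_lt continuous_const hcont2
  obtain ⟨ε, hε, hball⟩ := Metric.isOpen_iff.mp hopen a hcon
  have hball' : ∀ x ∈ Set.Ioo (a - ε) (a + ε), 0 < deriv (deriv f) x := by
    intro x hx
    exact hball (by rwa [Real.ball_eq_Ioo])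
  -- `deriv f` is strictly monotone on `Ioo (a-ε) (a+ε)`
  have hsm : StrictMonoOn (deriv f) (Set.Ioo (a - ε) (a + ε)) := by
    apply strictMonoOn_of_deriv_pos (convex_Ioo _ _) hd1.continuous.continuousOn
    intro x hx
    rw [interior_Ioo] at hx
    exact hball' x hx
  have haI : a ∈ Set.Ioo (a - ε) (a + ε) := ⟨by linarith, by linarith⟩
  -- hence `deriv f > 0` on `(a, a+ε)`
  have hdpos : ∀ x ∈ Set.Ioo a (a + ε), 0 < deriv f x := by
    intro x hx
    have := hsm haI ⟨by linarith [hx.1], hx.2⟩ hx.1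
    rwa [h0] at this
  -- so `f` is strictly monotone on `[a, a + ε/2]`
  have hsmf : StrictMonoOn f (Set.Icc a (a + ε / 2)) := by
    apply strictMonoOn_of_deriv_pos (convex_Icc _ _) hf.continuous.continuousOn
    intro x hx
    rw [interior_Icc] at hx
    exact hdpos x ⟨hx.1, by linarith [hx.2]⟩
  obtain ⟨δ, hδ, hb⟩ := Metric.eventually_nhds_iff.mp hmax
  set t : ℝ := min (ε / 2) δ / 2 with ht
  have ht0 : 0 < t := by positivity
  have htε : t ≤ ε / 2 := by
    have : min (ε / 2) δ ≤ ε / 2 := min_le_left _ _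
    linarith
  have htδ : t < δ := by
    have h1 : min (ε / 2) δ ≤ δ := min_le_right _ _
    have h2 : 0 < min (ε / 2) δ := lt_min (by linarith) hδ
    linarith
  have hlt : f a < f (a + t) :=
    hsmf ⟨le_refl a, by linarith⟩ ⟨by linarith, by linarith⟩ (by linarith)
  have hle : f (a + t) ≤ f a := by
    apply hb
    rw [Real.dist_eq]
    simp only [add_sub_cancel_left]
    rw [abs_of_pos ht0]
    exact htδ
  linarith

/-- Main auxiliary lemma: under the hypotheses, `u ≤ 0` everywhere. -/
lemma ker_Lc_nonpos (c : ℝ) (hc : 0 < c) (u : ℝ → ℝ → ℝ)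
    (hu : PeriodicSchwartzX u)
    (heq : ∀ x y : ℝ,
      deriv (fun y' => u x y') y + deriv (deriv (fun x' => u x' y)) x
        = 2 * deriv (fun x' => kinkProfile c x' * u x' y) x) :
    ∀ x y : ℝ, u x y ≤ 0 := by
  by_contra hcon
  push_neg at hcon
  obtain ⟨a, b, hab⟩ := hcon
  have hcont : Continuous (fun p : ℝ × ℝ => u p.1 p.2) := hu.smooth.continuous
  -- decay bound for `u` itself
  obtain ⟨C, hC⟩ := hu.decay 0 1
  have hC' : ∀ x y : ℝ, |u x y| ≤ C / (1 + |x|) := by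
    intro x y
    have := hC x y
    rwa [norm_iteratedFDeriv_zero, Real.norm_eq_abs, pow_one] at this
  have h1x : ∀ x : ℝ, (0:ℝ) < 1 + |x| := fun x => by positivity
  have hCpos : 0 < C := by
    have h1 := hC' a b
    have h2 : (0:ℝ) < C / (1 + |a|) := lt_of_lt_of_le (lt_of_lt_of_le hab (le_abs_self _)) h1
    have := h1x a
    rcases div_pos_iff.mp h2 with ⟨hh, _⟩ | ⟨_, hh⟩
    · exact hh
    · linarith
  set R : ℝ := C / u a b with hR
  have hRpos : 0 < R := div_pos hCpos hab
  have hfar : ∀ x : ℝ, R ≤ |x| → ∀ y : ℝ, u x y < u a b := by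
    intro x hx y
    have h1 : u x y ≤ C / (1 + |x|) := le_trans (le_abs_self _) (hC' x y)
    have h2 : C / (1 + |x|) ≤ C / (1 + R) :=
      div_le_div_of_nonneg_left (le_of_lt hCpos) (by linarith) (by linarith)
    have h3 : C / (1 + R) < C / R := div_lt_div_of_pos_left hCpos hRpos (by linarith)
    have h4 : C / R = u a b := by
      rw [hR]
      field_simp
    linarith
  have hper : ∀ x : ℝ, Function.Periodic (u x) (2 * π) := fun x y => hu.periodic x y
  have h2π : (0:ℝ) < 2 * π := by positivity
  -- compact set and maximum
  set K : Set (ℝ × ℝ) := Set.Icc (-R) R ×ˢ Set.Icc 0 (2 * π) with hK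
  have hKc : IsCompact K := (isCompact_Icc).prod isCompact_Icc
  have hKne : K.Nonempty := by
    refine ⟨(0, 0), ?_⟩
    simp only [hK, Set.mem_prod, Set.mem_Icc]
    exact ⟨⟨by linarith, by linarith⟩, le_refl 0, by linarith⟩
  obtain ⟨p₀, hp₀K, hp₀max⟩ := hKc.exists_isMaxOn hKne hcont.continuousOn
  obtain ⟨x₀, y₀⟩ := p₀
  have hmaxK : ∀ p ∈ K, u p.1 p.2 ≤ u x₀ y₀ := fun p hp => hp₀max hp
  -- `|a| ≤ R`
  have haR : |a| ≤ R := by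
    by_contra hcc
    push_neg at hcc
    exact absurd (hfar a (le_of_lt hcc) b) (lt_irrefl _)
  -- u a b ≤ M
  have habM : u a b ≤ u x₀ y₀ := by
    obtain ⟨b', hb', hvb⟩ := (hper a).exists_mem_Ico₀ h2π b
    rw [hvb]
    exact hmaxK (a, b') ⟨abs_le.mp haR, ⟨hb'.1, le_of_lt hb'.2⟩⟩
  have hMpos : 0 < u x₀ y₀ := lt_of_lt_of_le hab habM
  -- global maximum
  have hglobal : ∀ x y : ℝ, u x y ≤ u x₀ y₀ := by
    intro x y
    obtain ⟨y', hy', hvy⟩ := (hper x).exists_mem_Ico₀ h2π y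
    rw [hvy]
    rcases le_or_gt (|x|) R with hxR | hxR
    · exact hmaxK (x, y') ⟨abs_le.mp hxR, ⟨hy'.1, le_of_lt hy'.2⟩⟩
    · exact le_of_lt (lt_of_lt_of_le (hfar x (le_of_lt hxR) y') habM)
  -- smoothness of the partial maps
  have hfx : ContDiff ℝ (⊤ : ℕ∞) (fun x' : ℝ => u x' y₀) :=
    hu.smooth.comp (ContDiff.prodMk (contDiff_id : ContDiff ℝ (⊤ : ℕ∞) (id : ℝ → ℝ)) contDiff_const)
  have hgy : ContDiff ℝ (⊤ : ℕ∞) (fun y' : ℝ => u x₀ y') :=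
    hu.smooth.comp (ContDiff.prodMk (contDiff_const : ContDiff ℝ (⊤ : ℕ∞) (fun _ : ℝ => x₀)) contDiff_id)
  -- local max conditions
  have hmaxf : IsLocalMax (fun x' : ℝ => u x' y₀) x₀ :=
    Filter.Eventually.of_forall fun x => hglobal x y₀
  have hmaxg : IsLocalMax (fun y' : ℝ => u x₀ y') y₀ :=
    Filter.Eventually.of_forall fun y => hglobal x₀ y
  have h1 : deriv (fun x' : ℝ => u x' y₀) x₀ = 0 := hmaxf.deriv_eq_zero
  have h2 : deriv (deriv (fun x' : ℝ => u x' y₀)) x₀ ≤ 0 := second_deriv_nonpos hfx hmaxf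
  have h3 : deriv (fun y' : ℝ => u x₀ y') y₀ = 0 := hmaxg.deriv_eq_zero
  -- derivative of the product term
  obtain ⟨q, hq, hQ⟩ := kink_deriv_pos c hc x₀
  have hux : HasDerivAt (fun x' : ℝ => u x' y₀) 0 x₀ := by
    have hfx' : ContDiff ℝ ((⊤ : ℕ∞) : WithTop ℕ∞) (fun x' : ℝ => u x' y₀) := hfx.of_le (by simp)
    have := ((contDiff_infty_iff_deriv.mp hfx').1 x₀).hasDerivAt
    rwa [h1] at this
  have hprod : HasDerivAt (fun x' : ℝ => kinkProfile c x' * u x' y₀)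
      (q * u x₀ y₀ + kinkProfile c x₀ * 0) x₀ := hQ.mul hux
  have h4 : deriv (fun x' : ℝ => kinkProfile c x' * u x' y₀) x₀ = q * u x₀ y₀ := by
    rw [hprod.deriv]; ring
  have hEq := heq x₀ y₀
  rw [h3, h4] at hEq
  have hqM : 0 < q * u x₀ y₀ := mul_pos hq hMpos
  linarith

/-- Triviality of the kernel of `L_c = ∂_x + ∂_x⁻¹∂_y − 2Q_c`: a smooth, `2π`-periodic-in-`y`,
rapidly decaying solution of `∂_y u + ∂_x²u = 2∂_x(Q_c u)` vanishes identically. -/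
theorem ker_Lc_trivial (c : ℝ) (hc : 0 < c) (u : ℝ → ℝ → ℝ)
    (hu : PeriodicSchwartzX u)
    (heq : ∀ x y : ℝ,
      deriv (fun y' => u x y') y + deriv (deriv (fun x' => u x' y)) x
        = 2 * deriv (fun x' => kinkProfile c x' * u x' y) x) :
    ∀ x y : ℝ, u x y = 0 := by
  have hle : ∀ x y : ℝ, u x y ≤ 0 := ker_Lc_nonpos c hc u hu heq
  -- apply the same lemma to `-u`
  set v : ℝ → ℝ → ℝ := fun x y => -(u x y) with hv
  have hvu : PeriodicSchwartzX v := by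
    constructor
    · exact hu.smooth.neg
    · intro x y
      simp only [hv, hu.periodic]
    · intro n m
      obtain ⟨C, hC⟩ := hu.decay n m
      refine ⟨C, fun x y => ?_⟩
      have hfn : (fun p : ℝ × ℝ => v p.1 p.2) = -(fun p : ℝ × ℝ => u p.1 p.2) := rfl
      rw [hfn, iteratedFDeriv_neg_apply, norm_neg]
      exact hC x y
  have hveq : ∀ x y : ℝ,
      deriv (fun y' => v x y') y + deriv (deriv (fun x' => v x' y)) x
        = 2 * deriv (fun x' => kinkProfile c x' * v x' y) x := by
    intro x y
    have e1 : deriv (fun y' => v x y') y = -deriv (fun y' => u x y') y := deriv.neg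
    have e2 : deriv (fun x' : ℝ => v x' y) = fun t : ℝ => -deriv (fun x' : ℝ => u x' y) t :=
      funext fun t => deriv.neg
    have e3 : deriv (deriv (fun x' : ℝ => v x' y)) x
        = -deriv (deriv (fun x' : ℝ => u x' y)) x := by
      rw [e2]
      exact deriv.neg
    have e4 : (fun x' : ℝ => kinkProfile c x' * v x' y)
        = fun x' : ℝ => -(kinkProfile c x' * u x' y) := by
      funext t; simp [hv, mul_neg]
    have e5 : deriv (fun x' : ℝ => kinkProfile c x' * v x' y) x
        = -deriv (fun x' : ℝ => kinkProfile c x' * u x' y) x := by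
      rw [e4]
      exact deriv.neg
    rw [e1, e3, e5]
    have := heq x y
    linarith
  have hge : ∀ x y : ℝ, v x y ≤ 0 := ker_Lc_nonpos c hc v hvu hveq
  intro x y
  have h1 := hle x y
  have h2 := hge x y
  simp only [hv, neg_nonpos] at h2
  linarith
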